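/- arXiv:2510.24812 — 3 statements merged into one kernel-verified Lean document; each statement's English description precedes it below -/
import Mathlib

section
/- Suppose a sequence (a_t)_{t≥0} of reals satisfies a_{t+1} = a_t + c/(1 + b·exp(a_t)) for some constants c ∈ [0,1] and b ≥ 0, and for each t let x_t be the unique real solution of x_t + b·exp(x_t) = c·t + a_0 + b·exp(a_0). Then for all t ≥ 0 it holds that x_t ≤ a_t ≤ x_t + c/(1 + b·exp(a_0)). -/
/-- If `a (t+1) = a t + c / (1 + b * exp (a t))` with `c ∈ [0,1]`, `b ≥ 0`, and
`x t` solves `x t + b * exp (x t) = c * t + a 0 + b * exp (a 0)`, then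
`x t ≤ a t ≤ x t + c / (1 + b * exp (a 0))` for all `t`. -/
theorem stmt1 (b c : ℝ) (hb : 0 ≤ b) (hc0 : 0 ≤ c) (hc1 : c ≤ 1)
    (a x : ℕ → ℝ)
    (ha : ∀ t, a (t + 1) = a t + c / (1 + b * Real.exp (a t)))
    (hx : ∀ t, x t + b * Real.exp (x t) = c * t + a 0 + b * Real.exp (a 0)) :
    ∀ t, x t ≤ a t ∧ a t ≤ x t + c / (1 + b * Real.exp (a 0)) := by
  have hpos : ∀ y : ℝ, 0 < 1 + b * Real.exp y := by
    intro y; positivity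
  have hmono : StrictMono (fun y : ℝ => y + b * Real.exp y) := by
    intro u v huv
    have : b * Real.exp u ≤ b * Real.exp v :=
      mul_le_mul_of_nonneg_left (Real.exp_le_exp.2 huv.le) hb
    simpa using add_lt_add_of_lt_of_le huv this
  set d := c / (1 + b * Real.exp (a 0)) with hd
  have hd0 : 0 ≤ d := div_nonneg hc0 (hpos _).le
  -- a is monotone from a 0
  have ha0le : ∀ t, a 0 ≤ a t := by
    intro t
    induction t with
    | zero => exact le_refl _
    | succ n ih =>
      have : 0 ≤ c / (1 + b * Real.exp (a n)) := div_nonneg hc0 (hpos _).le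
      rw [ha n]; linarith
  -- lower bound
  have hlow : ∀ t, c * t + a 0 + b * Real.exp (a 0) ≤ a t + b * Real.exp (a t) := by
    intro t
    induction t with
    | zero => simp
    | succ n ih =>
      set Δ := c / (1 + b * Real.exp (a n)) with hΔ
      have hΔ0 : 0 ≤ Δ := div_nonneg hc0 (hpos _).le
      have hΔc : Δ * (1 + b * Real.exp (a n)) = c := div_mul_cancel₀ _ (hpos _).ne'
      have hexp : Real.exp (a (n + 1)) = Real.exp (a n) * Real.exp Δ := by
        rw [ha n, Real.exp_add]
      have h1 : Δ + 1 ≤ Real.exp Δ := Real.add_one_le_exp Δ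
      have he : 0 < Real.exp (a n) := Real.exp_pos _
      have : a n + b * Real.exp (a n) + c ≤ a (n + 1) + b * Real.exp (a (n + 1)) := by
        rw [hexp, ha n, ← hΔ]
        nlinarith [mul_le_mul_of_nonneg_left h1 (mul_nonneg hb he.le)]
      push_cast
      linarith
  -- upper bound
  have hup : ∀ t, a t - d + b * Real.exp (a t - d) ≤ c * t + a 0 + b * Real.exp (a 0) := by
    intro t
    induction t with
    | zero =>
      have h := hmono.monotone (show a 0 - d ≤ a 0 by linarith)
      simpa using h
    | succ n ih =>
      set Δ := c / (1 + b * Real.exp (a n)) with hΔ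
      have hΔ0 : 0 ≤ Δ := div_nonneg hc0 (hpos _).le
      have hΔc : Δ * (1 + b * Real.exp (a n)) = c := div_mul_cancel₀ _ (hpos _).ne'
      have hΔd : Δ ≤ d := by
        apply div_le_div_of_nonneg_left hc0 (hpos (a 0))
        have := Real.exp_le_exp.2 (ha0le n)
        nlinarith
      have he : 0 < Real.exp (a n) := Real.exp_pos _
      -- key: exp (-d) * (exp Δ - 1) ≤ Δ
      have hkey : Real.exp (-d) * (Real.exp Δ - 1) ≤ Δ := by
        have h1 : -Δ + 1 ≤ Real.exp (-Δ) := Real.add_one_le_exp _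
        have h2 : Real.exp (-Δ) * Real.exp Δ = 1 := by
          rw [← Real.exp_add]; simp
        have h3 : Real.exp Δ - 1 ≤ Δ * Real.exp Δ := by
          nlinarith [Real.exp_pos Δ]
        have h4 : Real.exp (-d) * Real.exp Δ ≤ 1 := by
          rw [← Real.exp_add]
          have : -d + Δ ≤ 0 := by linarith
          calc Real.exp (-d + Δ) ≤ Real.exp 0 := Real.exp_le_exp.2 this
            _ = 1 := Real.exp_zero
        nlinarith [Real.exp_pos (-d), Real.exp_pos Δ]
      have hexp1 : Real.exp (a (n + 1) - d) = Real.exp (a n - d) * Real.exp Δ := by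
        rw [ha n, show a n + Δ - d = (a n - d) + Δ by ring, Real.exp_add]
      have hexp2 : Real.exp (a n - d) = Real.exp (a n) * Real.exp (-d) := by
        rw [← Real.exp_add]; ring_nf
      have hstep : a (n + 1) - d + b * Real.exp (a (n + 1) - d)
          ≤ a n - d + b * Real.exp (a n - d) + c := by
        rw [hexp1, hexp2, ha n, ← hΔ]
        nlinarith [mul_le_mul_of_nonneg_left hkey (mul_nonneg hb he.le)]
      push_cast
      linarith
  intro t
  constructor
  · have : x t + b * Real.exp (x t) ≤ a t + b * Real.exp (a t) := by
      rw [hx t]; exact hlow t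
    exact hmono.le_iff_le.mp this
  · have : a t - d + b * Real.exp (a t - d) ≤ x t + b * Real.exp (x t) := by
      rw [hx t]; exact hup t
    have := hmono.le_iff_le.mp this
    linarith
end

section
/- Let ξ₁, …, ξ_n be nonzero vectors in ℝ^d such that ‖ξ_i‖² ≥ σ²d/2 for all i and |⟨ξ_i, ξ_j⟩|/‖ξ_j‖² ≤ β/n for all i ≠ j, where β ≤ 1. Then for any signs y_i ∈ {±1} and coefficients ρ_i ∈ ℝ, the vector v = Σ_i y_i ρ_i ξ_i/‖ξ_i‖² satisfies ‖v‖² ≤ (4/(σ²d))·Σ_i ρ_i². -/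
open scoped RealInnerProductSpace
open Finset

/-- Norm bound for a linear combination of nearly-orthogonal noise vectors. -/
theorem stmt10 (d n : ℕ) (hd : 0 < d) (hn : 0 < n) (σ β : ℝ) (hσ : 0 < σ)
    (hβ0 : 0 ≤ β) (hβ1 : β ≤ 1)
    (ξ : Fin n → EuclideanSpace ℝ (Fin d))
    (hne : ∀ i, ξ i ≠ 0)
    (hnorm : ∀ i, σ ^ 2 * d / 2 ≤ ‖ξ i‖ ^ 2)
    (hcross : ∀ i j, i ≠ j → |⟪ξ i, ξ j⟫| / ‖ξ j‖ ^ 2 ≤ β / n)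
    (y : Fin n → ℝ) (hy : ∀ i, y i = 1 ∨ y i = -1)
    (ρ : Fin n → ℝ) :
    ‖∑ i, (y i * ρ i / ‖ξ i‖ ^ 2) • ξ i‖ ^ 2 ≤ (4 / (σ ^ 2 * d)) * ∑ i, ρ i ^ 2 := by
  have hd' : (0:ℝ) < d := by exact_mod_cast hd
  have hn' : (0:ℝ) < n := by exact_mod_cast hn
  have hσd : (0:ℝ) < σ^2 * d := by positivity
  set B : ℝ := 2 / (σ^2 * d) with hB
  have hBpos : 0 < B := by positivity
  have hpos : ∀ i, (0:ℝ) < ‖ξ i‖^2 := fun i => by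
    have := hne i
    have : ‖ξ i‖ ≠ 0 := norm_ne_zero_iff.mpr this
    positivity
  have hinv : ∀ i, 1 / ‖ξ i‖^2 ≤ B := fun i => by
    rw [hB, div_le_div_iff₀ (hpos i) hσd]
    nlinarith [hnorm i, hpos i]
  set a : Fin n → ℝ := fun i => y i * ρ i / ‖ξ i‖^2 with ha
  have hy2 : ∀ i, (y i)^2 = 1 := fun i => by rcases hy i with h | h <;> rw [h] <;> ring
  have hyabs : ∀ i, |y i| = 1 := fun i => by rcases hy i with h | h <;> rw [h] <;> simp
  have haabs : ∀ i, |a i| = |ρ i| / ‖ξ i‖^2 := fun i => by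
    rw [ha]
    rw [abs_div, abs_mul, hyabs i, one_mul, abs_of_pos (hpos i)]
  set F : Fin n → Fin n → ℝ := fun i j =>
    (if i = j then B * ρ i ^ 2 else 0) + B / n * ((ρ i ^ 2 + ρ j ^ 2) / 2) with hF
  set S : ℝ := ∑ i, ρ i ^ 2 with hS
  have key : ‖∑ i, a i • ξ i‖^2 = ∑ i, ∑ j, a i * (a j * ⟪ξ i, ξ j⟫) := by
    rw [← real_inner_self_eq_norm_sq, sum_inner]
    refine Finset.sum_congr rfl fun i _ => ?_
    rw [real_inner_smul_left, inner_sum, Finset.mul_sum]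
    exact Finset.sum_congr rfl fun j _ => by rw [real_inner_smul_right]
  have hterm : ∀ i j : Fin n, a i * (a j * ⟪ξ i, ξ j⟫) ≤ F i j := by
    intro i j
    rcases eq_or_ne i j with rfl | hij
    · simp only [hF, if_pos rfl]
      have hne0 : ‖ξ i‖ ≠ 0 := norm_ne_zero_iff.mpr (hne i)
      have h1 : a i * (a i * ⟪ξ i, ξ i⟫) = (y i)^2 * ρ i ^2 / ‖ξ i‖^2 := by
        rw [real_inner_self_eq_norm_sq, ha]
        field_simp [hne0]
      rw [h1, hy2 i, one_mul]
      have h2 : ρ i ^ 2 / ‖ξ i‖^2 ≤ B * ρ i ^ 2 := by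
        rw [div_le_iff₀ (hpos i)]
        have h4 : 1 ≤ B * ‖ξ i‖ ^ 2 := by
          have := hinv i; rw [div_le_iff₀ (hpos i)] at this; linarith
        nlinarith [sq_nonneg (ρ i), h4]
      have h3 : (0:ℝ) ≤ B / n * ((ρ i ^ 2 + ρ i ^ 2) / 2) := by positivity
      simp only [if_true]
      linarith
    · simp only [hF, if_neg hij, zero_add]
      have hI : |⟪ξ i, ξ j⟫| / ‖ξ j‖^2 ≤ 1 / n := by
        calc |⟪ξ i, ξ j⟫| / ‖ξ j‖^2 ≤ β / n := hcross i j hij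
        _ ≤ 1 / n := by gcongr
      have habs : |a i * (a j * ⟪ξ i, ξ j⟫)| ≤ B * |ρ i| * (|ρ j| * (1/n)) := by
        rw [abs_mul, abs_mul, haabs i, haabs j]
        have e1 : |ρ i| / ‖ξ i‖^2 ≤ B * |ρ i| := by
          rw [div_le_iff₀ (hpos i)]
          have h4 : 1 ≤ B * ‖ξ i‖ ^ 2 := by
            have := hinv i; rw [div_le_iff₀ (hpos i)] at this; linarith
          nlinarith [abs_nonneg (ρ i), h4]
        have e2 : |ρ j| / ‖ξ j‖^2 * |⟪ξ i, ξ j⟫| ≤ |ρ j| * (1/n) := by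
          have : |ρ j| / ‖ξ j‖^2 * |⟪ξ i, ξ j⟫| = |ρ j| * (|⟪ξ i, ξ j⟫| / ‖ξ j‖^2) := by
            ring
          rw [this]
          exact mul_le_mul_of_nonneg_left hI (abs_nonneg _)
        calc |ρ i| / ‖ξ i‖^2 * (|ρ j| / ‖ξ j‖^2 * |⟪ξ i, ξ j⟫|)
            ≤ (B * |ρ i|) * (|ρ j| * (1/n)) := by
              apply mul_le_mul e1 e2 (by positivity) (by positivity)
        _ = B * |ρ i| * (|ρ j| * (1/n)) := by ring
      calc a i * (a j * ⟪ξ i, ξ j⟫) ≤ |a i * (a j * ⟪ξ i, ξ j⟫)| := le_abs_self _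
      _ ≤ B * |ρ i| * (|ρ j| * (1/n)) := habs
      _ = B / n * (|ρ i| * |ρ j|) := by field_simp
      _ ≤ B / n * ((ρ i ^ 2 + ρ j ^ 2) / 2) := by
          have hBn : (0:ℝ) ≤ B / n := le_of_lt (div_pos hBpos hn')
          have hams : |ρ i| * |ρ j| ≤ (ρ i ^ 2 + ρ j ^ 2) / 2 := by
            nlinarith [sq_nonneg (|ρ i| - |ρ j|), sq_abs (ρ i), sq_abs (ρ j)]
          exact mul_le_mul_of_nonneg_left hams hBn
  have hFsum : ∑ i, ∑ j, F i j = 2 * B * S := by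
    have inner_eq : ∀ i : Fin n, ∑ j, F i j = B * ρ i ^ 2 + B / n * ((n * ρ i ^ 2 + S) / 2) := by
      intro i
      rw [hF]
      simp only [Finset.sum_add_distrib, Finset.sum_ite_eq, Finset.mem_univ, if_true]
      congr 1
      rw [← Finset.mul_sum]
      congr 1
      rw [← Finset.sum_div]
      congr 1
      rw [Finset.sum_add_distrib, Finset.sum_const, Finset.card_univ, Fintype.card_fin,
        nsmul_eq_mul, hS]
    calc ∑ i, ∑ j, F i j = ∑ i, (B * ρ i ^ 2 + B / n * ((n * ρ i ^ 2 + S) / 2)) :=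
          Finset.sum_congr rfl fun i _ => inner_eq i
    _ = B * S + B / n * ((n * S + n * S) / 2) := by
          rw [Finset.sum_add_distrib, ← Finset.mul_sum, ← Finset.mul_sum, ← Finset.sum_div,
            Finset.sum_add_distrib, ← Finset.mul_sum, Finset.sum_const, Finset.card_univ,
            Fintype.card_fin, nsmul_eq_mul, ← hS]
    _ = 2 * B * S := by field_simp; ring
  calc ‖∑ i, a i • ξ i‖^2 = ∑ i, ∑ j, a i * (a j * ⟪ξ i, ξ j⟫) := key
  _ ≤ ∑ i, ∑ j, F i j :=
      Finset.sum_le_sum fun i _ => Finset.sum_le_sum fun j _ => hterm i j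
  _ = 2 * B * S := hFsum
  _ = (4 / (σ ^ 2 * d)) * S := by rw [hB]; ring
end

section
/- Consider data points X = (x⁽¹⁾, x⁽²⁾, x⁽³⁾) ∈ (ℝ^d)³ with label y ∈ {±1}, where two of the patches are signal vectors from the set {μ_y, ν_y, −ν_y} (in any combination from the distribution's support, including (μ_y, μ_y), (±ν_y, ±ν_y), and mixed pairs with one μ_y and one ±ν_y) and one patch is a noise vector ξ orthogonal to all signal vectors μ₁, μ₋₁, ν₁, ν₋₁. Define the two-layer ReLU CNN f(W, X) = F₁(W₁,X) − F₋₁(W₋₁,X) with F_s(W_s, X) = (1/m)·Σ_{r=1}^m Σ_{p=1}^3 max(⟨w_{s,r}, x⁽ᵖ⁾⟩, 0), where m ≥ 2. Set w*_{s,1} = μ_s + ν_s, w*_{s,2} = μ_s − ν_s, and w*_{s,r} = 0 for r > 2, for each s ∈ {±1}. Then y·f(W*, X) > 0 for every such data point, assuming μ₁, μ₋₁, ν₁, ν₋₁ are mutually orthogonal nonzero vectors and ξ is orthogonal to all of them. -/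
open scoped RealInnerProductSpace

lemma sum_fin_two' {m : ℕ} (hm : 2 ≤ m) (f : Fin m → ℝ)
    (h : ∀ r : Fin m, 2 ≤ (r : ℕ) → f r = 0) :
    ∑ r, f r = f ⟨0, by omega⟩ + f ⟨1, by omega⟩ := by
  have key : ∑ r, f r = ∑ r ∈ ({⟨0, by omega⟩, ⟨1, by omega⟩} : Finset (Fin m)), f r := by
    symm
    apply Finset.sum_subset (Finset.subset_univ _)
    intro r _ hr
    apply h
    simp only [Finset.mem_insert, Finset.mem_singleton, Fin.ext_iff] at hr
    push_neg at hr
    omega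
  rw [key, Finset.sum_pair (by simp [Fin.ext_iff])]

set_option maxHeartbeats 1600000 in
/-- The explicitly constructed two-layer ReLU CNN `W*` (with filters `μ_s ± ν_s`) classifies
every data point from the distribution correctly: `y ⬝ f(W*, X) > 0`. -/
theorem stmt17 (d m : ℕ) (hm : 2 ≤ m)
    (mu nu : ℝ → EuclideanSpace ℝ (Fin d))
    (hmu1 : mu 1 ≠ 0) (hmu2 : mu (-1) ≠ 0) (hnu1 : nu 1 ≠ 0) (hnu2 : nu (-1) ≠ 0)
    (hmunorm : ‖mu 1‖ = ‖mu (-1)‖) (hnunorm : ‖nu 1‖ = ‖nu (-1)‖)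
    (ho1 : ⟪mu 1, mu (-1)⟫ = 0) (ho2 : ⟪mu 1, nu 1⟫ = 0) (ho3 : ⟪mu 1, nu (-1)⟫ = 0)
    (ho4 : ⟪mu (-1), nu 1⟫ = 0) (ho5 : ⟪mu (-1), nu (-1)⟫ = 0) (ho6 : ⟪nu 1, nu (-1)⟫ = 0)
    (ξ : EuclideanSpace ℝ (Fin d))
    (hξ1 : ⟪mu 1, ξ⟫ = 0) (hξ2 : ⟪mu (-1), ξ⟫ = 0)
    (hξ3 : ⟪nu 1, ξ⟫ = 0) (hξ4 : ⟪nu (-1), ξ⟫ = 0)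
    (y : ℝ) (hy : y = 1 ∨ y = -1)
    (v1 v2 : EuclideanSpace ℝ (Fin d))
    (hsig : (v1, v2) = (mu y, mu y) ∨
            (v1, v2) = (nu y, nu y) ∨ (v1, v2) = (nu y, -nu y) ∨
            (v1, v2) = (-nu y, nu y) ∨ (v1, v2) = (-nu y, -nu y) ∨
            (v1, v2) = (mu y, nu y) ∨ (v1, v2) = (mu y, -nu y) ∨
            (v1, v2) = (nu y, mu y) ∨ (v1, v2) = (-nu y, mu y))
    (x : Fin 3 → EuclideanSpace ℝ (Fin d))
    (hperm : ∃ e : Equiv.Perm (Fin 3), x (e 0) = v1 ∧ x (e 1) = v2 ∧ x (e 2) = ξ)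
    (W : ℝ → Fin m → EuclideanSpace ℝ (Fin d))
    (hW : ∀ s : ℝ, (s = 1 ∨ s = -1) → ∀ r : Fin m,
      W s r = if (r : ℕ) = 0 then mu s + nu s
              else if (r : ℕ) = 1 then mu s - nu s else 0) :
    0 < y * ((1 / (m : ℝ)) * ∑ r, ∑ p, max ⟪W 1 r, x p⟫ 0
             - (1 / (m : ℝ)) * ∑ r, ∑ p, max ⟪W (-1) r, x p⟫ 0) := by
  have h0 : (0 : ℕ) < m := by omega
  have h1 : (1 : ℕ) < m := by omega
  have hmpos : (0 : ℝ) < (m : ℝ) := by exact_mod_cast h0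
  have hA : (0:ℝ) < ‖mu 1‖ ^ 2 := pow_pos (norm_pos_iff.mpr hmu1) 2
  have hB : (0:ℝ) < ‖nu 1‖ ^ 2 := pow_pos (norm_pos_iff.mpr hnu1) 2
  have hA' : (0:ℝ) < ‖mu (-1)‖ ^ 2 := pow_pos (norm_pos_iff.mpr hmu2) 2
  have hB' : (0:ℝ) < ‖nu (-1)‖ ^ 2 := pow_pos (norm_pos_iff.mpr hnu2) 2
  have h1m : (0:ℝ) < 1 / (m:ℝ) := by positivity
  have ho1' : ⟪mu (-1), mu 1⟫ = 0 := by rw [real_inner_comm]; exact ho1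
  have ho2' : ⟪nu 1, mu 1⟫ = 0 := by rw [real_inner_comm]; exact ho2
  have ho3' : ⟪nu (-1), mu 1⟫ = 0 := by rw [real_inner_comm]; exact ho3
  have ho4' : ⟪nu 1, mu (-1)⟫ = 0 := by rw [real_inner_comm]; exact ho4
  have ho5' : ⟪nu (-1), mu (-1)⟫ = 0 := by rw [real_inner_comm]; exact ho5
  have ho6' : ⟪nu (-1), nu 1⟫ = 0 := by rw [real_inner_comm]; exact ho6
  have hW10 : W 1 ⟨0, h0⟩ = mu 1 + nu 1 := by simpa using hW 1 (Or.inl rfl) ⟨0, h0⟩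
  have hW11 : W 1 ⟨1, h1⟩ = mu 1 - nu 1 := by simpa using hW 1 (Or.inl rfl) ⟨1, h1⟩
  have hWm0 : W (-1) ⟨0, h0⟩ = mu (-1) + nu (-1) := by simpa using hW (-1) (Or.inr rfl) ⟨0, h0⟩
  have hWm1 : W (-1) ⟨1, h1⟩ = mu (-1) - nu (-1) := by simpa using hW (-1) (Or.inr rfl) ⟨1, h1⟩
  have key : ∀ s : ℝ, (s = 1 ∨ s = -1) →
      ∑ r : Fin m, ∑ p, max ⟪W s r, x p⟫ 0
        = (∑ p, max ⟪W s ⟨0, h0⟩, x p⟫ 0) + ∑ p, max ⟪W s ⟨1, h1⟩, x p⟫ 0 := by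
    intro s hs
    apply sum_fin_two' hm
    intro r hr
    have hz : W s r = 0 := by
      rw [hW s hs r, if_neg (by omega), if_neg (by omega)]
    simp [hz]
  have hsum : ∀ w : EuclideanSpace ℝ (Fin d),
      (∑ p, max ⟪w, x p⟫ 0) = max ⟪w, v1⟫ 0 + max ⟪w, v2⟫ 0 + max ⟪w, ξ⟫ 0 := by
    intro w
    obtain ⟨e, he0, he1, he2⟩ := hperm
    rw [← Equiv.sum_comp e (fun p => max ⟪w, x p⟫ 0), Fin.sum_univ_three, he0, he1, he2]
  rw [key 1 (Or.inl rfl), key (-1) (Or.inr rfl), hsum, hsum, hsum, hsum,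
    hW10, hW11, hWm0, hWm1]
  have mA : max (‖mu 1‖ ^ 2) 0 = ‖mu 1‖ ^ 2 := max_eq_left hA.le
  have mB : max (‖nu 1‖ ^ 2) 0 = ‖nu 1‖ ^ 2 := max_eq_left hB.le
  have mA' : max (‖mu (-1)‖ ^ 2) 0 = ‖mu (-1)‖ ^ 2 := max_eq_left hA'.le
  have mB' : max (‖nu (-1)‖ ^ 2) 0 = ‖nu (-1)‖ ^ 2 := max_eq_left hB'.le
  have mnB : max (-(‖nu 1‖ ^ 2)) 0 = 0 := max_eq_right (by linarith)
  have mnB' : max (-(‖nu (-1)‖ ^ 2)) 0 = 0 := max_eq_right (by linarith)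
  rcases hy with rfl | rfl <;>
    rcases hsig with h | h | h | h | h | h | h | h | h <;>
      simp only [Prod.mk.injEq] at h <;>
        obtain ⟨rfl, rfl⟩ := h <;>
          simp only [inner_add_left, inner_sub_left, inner_neg_right,
            ho1, ho2, ho3, ho4, ho5, ho6, ho1', ho2', ho3', ho4', ho5', ho6',
            hξ1, hξ2, hξ3, hξ4, real_inner_self_eq_norm_sq,
            add_zero, zero_add, sub_zero, zero_sub, neg_zero, neg_neg, max_self,
            mA, mB, mA', mB', mnB, mnB', mul_zero, mul_one, one_mul] <;>
          · first
              | (rw [neg_mul_neg, one_mul]) | skip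
            exact mul_pos h1m (by linarith)
end
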